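/- arXiv:2003.02558 — 2 statements merged into one kernel-verified Lean document; each statement's English description precedes it below -/
import Mathlib

section
/- Let S be an involution semigroup and T an involution subsemigroup such that x H_S² x* ⊆ T for every x ∈ S. Then Tω is a closed involution subsemigroup of S containing H_S; in particular (Tω)ω = Tω and (Tω)* = Tω. -/
open Pointwise

/-- The set of hermitian squares of an involution semigroup. -/
def hermSq (S : Type*) [Mul S] [Star S] : Set S := {a | ∃ x : S, a = x * star x}

/-- `T` is an involution subsemigroup. -/
def IsInvSub {S : Type*} [Mul S] [Star S] (T : Set S) : Prop :=
  (∀ x ∈ T, ∀ y ∈ T, x * y ∈ T) ∧ ∀ x ∈ T, star x ∈ T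

/-- `T` is an HS-stable involution subsemigroup. -/
def IsHSStable {S : Type*} [Mul S] [Star S] (T : Set S) : Prop :=
  IsInvSub T ∧ hermSq S ⊆ T ∧
    ∀ h ∈ hermSq S, ∀ x y : S, x * h * y ∈ T → x * y ∈ T

/-- The HS-stable involution subsemigroup generated by `B`. -/
def genHS {S : Type*} [Mul S] [Star S] (B : Set S) : Set S :=
  ⋂₀ {T | IsHSStable T ∧ B ⊆ T}

/-- The involution subsemigroup generated by `B`. -/
def genInv {S : Type*} [Mul S] [Star S] (B : Set S) : Set S :=
  ⋂₀ {T | IsInvSub T ∧ B ⊆ T}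

/-- The closure `Tω`. -/
def omegaCl {S : Type*} [Mul S] (T : Set S) : Set S := {s | ∃ t ∈ T, s * t ∈ T}

/-- `S² = {x y : x, y ∈ S}`. -/
def sqSet (S : Type*) [Mul S] : Set S := {a | ∃ x y : S, a = x * y}

/-- Iterated complex product `A 0 * A 1 * ⋯ * A n`. -/
def pprod {S : Type*} [Mul S] (A : ℕ → Set S) : ℕ → Set S
  | 0 => A 0
  | (k+1) => pprod A k * A (k+1)


/-! All witnesses come from one observation: if `x⋆ m ∈ T` with `m ∈ T`, then
`x (h h') x⋆ m ∈ T` for all hermitian squares `h, h'`. Taking `h, h'` to be hermitian squares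
of elements of `T`, everything to the right of a suitable left factor of `x (h h') x⋆ m` is a
product of elements of `T`, which exhibits that factor as a member of `Tω`. -/

lemma omegaCl_mono {S : Type*} [Mul S] {T U : Set S} (hTU : T ⊆ U) : omegaCl T ⊆ omegaCl U :=
  fun _ ⟨t, ht, hst⟩ => ⟨t, hTU ht, hTU hst⟩

lemma subset_omegaCl {S : Type*} [Mul S] {T : Set S}
    (hmul : ∀ x ∈ T, ∀ y ∈ T, x * y ∈ T) : T ⊆ omegaCl T :=
  fun t ht => ⟨t, ht, hmul t ht t ht⟩

lemma image_star_eq_self {S : Type*} [InvolutiveStar S] {A : Set S}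
    (hA : ∀ x ∈ A, star x ∈ A) : (star ·) '' A = A := by
  refine Set.Subset.antisymm ?_ fun a ha => ⟨star a, hA a ha, star_star a⟩
  rintro _ ⟨a, ha, rfl⟩
  exact hA a ha

lemma mul_star_mem_hermSq {S : Type*} [Mul S] [Star S] (x : S) : x * star x ∈ hermSq S :=
  ⟨x, rfl⟩

section Conjugation

variable {S : Type*} [Semigroup S] [StarMul S] {T : Set S}

/-- `x H_S² x⋆ ⊆ T` for every `x`. -/
def ConjHermSqSqSubset (T : Set S) : Prop :=
  ∀ x : S, ∀ h ∈ hermSq S, ∀ h' ∈ hermSq S, x * (h * h') * star x ∈ T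

lemma star_mem_omegaCl (hT : IsInvSub T) (hconj : ConjHermSqSqSubset T) {s : S}
    (hs : s ∈ omegaCl T) : star s ∈ omegaCl T := by
  obtain ⟨t, ht, hst⟩ := hs
  set h := s * t * star (s * t)
  have hh : h ∈ T := hT.1 _ hst _ (hT.2 _ hst)
  refine ⟨h * h * (s * t), hT.1 _ (hT.1 _ hh _ hh) _ hst, ?_⟩
  have hassoc : star s * (h * h * (s * t)) = star s * (h * h) * star (star s) * t := by
    simp only [star_star, mul_assoc]
  rw [hassoc]
  exact hT.1 _ (hconj _ _ (mul_star_mem_hermSq _) _ (mul_star_mem_hermSq _)) _ ht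

lemma mul_mem_omegaCl_of_star_mem (hT : IsInvSub T) (hconj : ConjHermSqSqSubset T) {x y : S}
    (hx : star x ∈ omegaCl T) (hy : y ∈ omegaCl T) : x * y ∈ omegaCl T := by
  obtain ⟨m, hm, hxm⟩ := hx
  obtain ⟨t, ht, hyt⟩ := hy
  refine ⟨t * star (y * t) * (t * star t) * (star x * m),
    hT.1 _ (hT.1 _ (hT.1 _ ht _ (hT.2 _ hyt)) _ (hT.1 _ ht _ (hT.2 _ ht))) _ hxm, ?_⟩
  have hassoc : x * y * (t * star (y * t) * (t * star t) * (star x * m)) =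
      x * (y * t * star (y * t) * (t * star t)) * star x * m := by
    simp only [mul_assoc]
  rw [hassoc]
  exact hT.1 _ (hconj _ _ (mul_star_mem_hermSq _) _ (mul_star_mem_hermSq _)) _ hm

lemma mem_omegaCl_of_star_mul_mem (hT : IsInvSub T) (hconj : ConjHermSqSqSubset T) {s u : S}
    (hu : u ∈ omegaCl T) (hsu : star (s * u) ∈ omegaCl T) : s ∈ omegaCl T := by
  obtain ⟨m, hm, hsum⟩ := hsu
  obtain ⟨v, hv, huv⟩ := hu
  refine ⟨u * v * (star v * (v * star v)) * (star (s * u) * m),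
    hT.1 _ (hT.1 _ huv _ (hT.1 _ (hT.2 _ hv) _ (hT.1 _ hv _ (hT.2 _ hv)))) _ hsum, ?_⟩
  have hassoc : s * (u * v * (star v * (v * star v)) * (star (s * u) * m)) =
      s * u * (v * star v * (v * star v)) * star (s * u) * m := by
    simp only [mul_assoc]
  rw [hassoc]
  exact hT.1 _ (hconj _ _ (mul_star_mem_hermSq _) _ (mul_star_mem_hermSq _)) _ hm

lemma hermSq_subset_omegaCl (hconj : ConjHermSqSqSubset T) : hermSq S ⊆ omegaCl T := by
  rintro _ ⟨x, rfl⟩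
  set h := star x * x
  have hh : h ∈ hermSq S := by simpa only [star_star] using mul_star_mem_hermSq (star x)
  have hhh : h * h ∈ hermSq S := by
    simpa only [h, star_mul, star_star, mul_assoc] using mul_star_mem_hermSq h
  refine ⟨x * (h * h) * star x, hconj x h hh h hh, ?_⟩
  have hassoc : x * star x * (x * (h * h) * star x) = x * (h * (h * h)) * star x := by
    simp only [h, mul_assoc]
  rw [hassoc]
  exact hconj x h hh _ hhh

lemma isInvSub_omegaCl (hT : IsInvSub T) (hconj : ConjHermSqSqSubset T) :
    IsInvSub (omegaCl T) :=
  ⟨fun _ hx _ hy => mul_mem_omegaCl_of_star_mem hT hconj (star_mem_omegaCl hT hconj hx) hy,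
    fun _ => star_mem_omegaCl hT hconj⟩

lemma omegaCl_omegaCl (hT : IsInvSub T) (hconj : ConjHermSqSqSubset T) :
    omegaCl (omegaCl T) = omegaCl T := by
  refine Set.Subset.antisymm ?_ (omegaCl_mono (subset_omegaCl hT.1))
  rintro s ⟨u, hu, hsu⟩
  exact mem_omegaCl_of_star_mul_mem hT hconj hu (star_mem_omegaCl hT hconj hsu)

end Conjugation

theorem stmt11 {S : Type*} [Semigroup S] [StarMul S] (T : Set S) (hT : IsInvSub T)
    (h1 : ∀ x : S, ∀ h ∈ hermSq S, ∀ h' ∈ hermSq S, x * (h * h') * star x ∈ T) :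
    IsInvSub (omegaCl T) ∧ hermSq S ⊆ omegaCl T ∧
      omegaCl (omegaCl T) = omegaCl T ∧ (star ·) '' omegaCl T = omegaCl T :=
  ⟨isInvSub_omegaCl hT h1, hermSq_subset_omegaCl h1, omegaCl_omegaCl hT h1,
    image_star_eq_self fun _ => star_mem_omegaCl hT h1⟩
end

section
/- Let S be an involution semigroup with a zero element 0. Then 0* = 0, and for any A ⊆ S the HS-stable involution subsemigroup generated by A equals S² ∪ ((A ∪ A*) \ S²). Consequently, S is HS-simple if and only if S = S². -/
open Pointwise

/-!
A zero `z` is a hermitian square (`z = z z*`) with `x z y = z` for all `x, y`, so HS-stability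
turns `z ∈ T` into `x y ∈ T`: every HS-stable set contains `S²`. Conversely `S²` together with
any star-closed set is HS-stable, since the cancellation condition `x h y ∈ T → x y ∈ T` only
ever asks for an element of `S²`.
-/

section InvolutionMagma

variable {S : Type*} [Mul S] [StarMul S]

theorem star_eq_self_of_mul_star_eq_self {z : S} (hz : z * star z = z) : star z = z :=
  calc star z = star (z * star z) := by rw [hz]
    _ = z * star z := by rw [star_mul, star_star]
    _ = z := hz

theorem star_mem_sqSet {a : S} (ha : a ∈ sqSet S) : star a ∈ sqSet S := by
  obtain ⟨x, y, rfl⟩ := ha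
  exact ⟨star y, star x, star_mul x y⟩

theorem isHSStable_of_sqSet_subset {T : Set S} (hsq : sqSet S ⊆ T)
    (hstar : ∀ x ∈ T, star x ∈ T) : IsHSStable T :=
  ⟨⟨fun x _ y _ => hsq ⟨x, y, rfl⟩, hstar⟩,
    fun _ ⟨x, hx⟩ => hsq ⟨x, star x, hx⟩,
    fun _ _ x y _ => hsq ⟨x, y, rfl⟩⟩

theorem isHSStable_sqSet : IsHSStable (sqSet S) :=
  isHSStable_of_sqSet_subset subset_rfl fun _ => star_mem_sqSet

theorem isHSStable_sqSet_union_union_image_star (A : Set S) :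
    IsHSStable (sqSet S ∪ (A ∪ star '' A)) := by
  refine isHSStable_of_sqSet_subset Set.subset_union_left ?_
  rintro x (hx | hx | ⟨a, ha, rfl⟩)
  · exact Or.inl (star_mem_sqSet hx)
  · exact Or.inr (Or.inr ⟨x, hx, rfl⟩)
  · exact Or.inr (Or.inl (by rwa [star_star]))

end InvolutionMagma

theorem sqSet_subset_of_isHSStable {S : Type*} [Mul S] [Star S] {z : S}
    (hz : ∀ s : S, z * s = z ∧ s * z = z) {T : Set S} (hT : IsHSStable T) : sqSet S ⊆ T := by
  rintro _ ⟨x, y, rfl⟩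
  have hherm : z ∈ hermSq S := ⟨z, ((hz (star z)).1).symm⟩
  have hxzy : x * z * y = z := by rw [(hz x).2, (hz y).1]
  exact hT.2.2 z hherm x y (by rw [hxzy]; exact hT.2.1 hherm)

theorem genHS_eq_sqSet_union_union_image_star {S : Type*} [Mul S] [StarMul S] {z : S}
    (hz : ∀ s : S, z * s = z ∧ s * z = z) (A : Set S) :
    genHS A = sqSet S ∪ (A ∪ star '' A) := by
  have hmem : sqSet S ∪ (A ∪ star '' A) ∈ {T | IsHSStable T ∧ A ⊆ T} :=
    ⟨isHSStable_sqSet_union_union_image_star A, fun a ha => Or.inr (Or.inl ha)⟩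
  refine (Set.sInter_subset_of_mem hmem).antisymm (Set.subset_sInter ?_)
  rintro T ⟨hT, hAT⟩ x (hx | hx | ⟨a, ha, rfl⟩)
  · exact sqSet_subset_of_isHSStable hz hT hx
  · exact hAT hx
  · exact hT.1.2 a (hAT ha)

theorem stmt16 {S : Type*} [Semigroup S] [StarMul S] (z : S)
    (hz : ∀ s : S, z * s = z ∧ s * z = z) :
    star z = z ∧
      (∀ A : Set S, genHS A = sqSet S ∪ ((A ∪ (star ·) '' A) \ sqSet S)) ∧
      ((∀ T : Set S, IsHSStable T → T = Set.univ) ↔ sqSet S = Set.univ) := by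
  refine ⟨star_eq_self_of_mul_star_eq_self (hz (star z)).1, fun A => ?_, ?_⟩
  · rw [Set.union_sdiff_self]
    exact genHS_eq_sqSet_union_union_image_star hz A
  · refine ⟨fun h => h _ isHSStable_sqSet, fun h T hT => ?_⟩
    exact Set.eq_univ_of_univ_subset (h ▸ sqSet_subset_of_isHSStable hz hT)
end
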